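/- arXiv:2406.08489 — 2 statements merged into one kernel-verified Lean document; each statement's English description precedes it below -/
import Mathlib

section
/- From the set of all 2^n full clauses over n variables (with n ≥ 1), repeated resolution derives any pair of contradicting 1-terminal clauses: for every variable t : Fin n, both unit clauses {(t, true)} and {(t, false)} belong to the resolution closure of the set of all full clauses. -/
/-- A full clause contains exactly one of `(i, true)`, `(i, false)` for every variable `i`. -/
def IsFullClause (n : ℕ) (F : Finset (Fin n × Bool)) : Prop :=
  ∀ i : Fin n, Xor' ((i, true) ∈ F) ((i, false) ∈ F)

/-- The resolution closure of a set `S` of clauses: the smallest set of clauses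
containing `S` and closed under taking resolvents. -/
inductive ResolutionClosure (n : ℕ) (S : Set (Finset (Fin n × Bool))) :
    Finset (Fin n × Bool) → Prop
  | base {C : Finset (Fin n × Bool)} : C ∈ S → ResolutionClosure n S C
  | resolve {C D : Finset (Fin n × Bool)} (t : Fin n) :
      ResolutionClosure n S C → ResolutionClosure n S D →
      (t, true) ∈ C → (t, false) ∈ D →
      ResolutionClosure n S ((C \ {(t, true)}) ∪ (D \ {(t, false)}))

lemma aux_resolve (n : ℕ) (t : Fin n) (B : Finset (Fin n)) :
    ∀ f : Fin n → Bool, t ∉ B →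
    ResolutionClosure n {F | IsFullClause n F}
      ((Finset.univ \ B).image (fun i => (i, f i))) := by
  induction B using Finset.strongInduction with
  | _ B ih =>
    intro f hB
    rcases B.eq_empty_or_nonempty with rfl | ⟨s, hs⟩
    · apply ResolutionClosure.base
      intro i
      have h : ∀ b : Bool, ((i, b) ∈ (Finset.univ \ (∅ : Finset (Fin n))).image
          (fun j => (j, f j))) ↔ f i = b := by
        intro b
        simp only [Finset.sdiff_empty, Finset.mem_image, Finset.mem_univ, true_and,
          Prod.ext_iff]
        constructor
        · rintro ⟨j, rfl, hb⟩; exact hb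
        · intro hb; exact ⟨i, rfl, hb⟩
      rw [Xor', h true, h false]
      cases hb : f i <;> simp [hb]
    · have hst : s ≠ t := fun h => hB (h ▸ hs)
      set C : Finset (Fin n × Bool) := (Finset.univ \ B).image (fun i => (i, f i)) with hC
      have hnot : ∀ c : Bool, (s, c) ∉ C := by
        intro c hc
        simp only [hC, Finset.mem_image, Finset.mem_sdiff, Finset.mem_univ, true_and,
          Prod.ext_iff] at hc
        obtain ⟨j, hj, hj1, hj2⟩ := hc
        exact hj (hj1 ▸ hs)
      have key : ∀ c : Bool, ((Finset.univ \ B.erase s).image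
          (fun i => (i, Function.update f s c i))) = insert (s, c) C := by
        intro c
        ext ⟨i, b⟩
        simp only [Finset.mem_image, Finset.mem_sdiff, Finset.mem_univ, true_and,
          Finset.mem_erase, Finset.mem_insert, hC, Prod.ext_iff]
        constructor
        · rintro ⟨j, hj, rfl, rfl⟩
          by_cases h : j = s
          · subst h; simp [Function.update_self]
          · right; exact ⟨j, fun hb => hj ⟨h, hb⟩, rfl, by simp [Function.update_of_ne h]⟩
        · rintro (⟨h1, h2⟩ | ⟨j, hj, rfl, rfl⟩)
          · exact ⟨s, by simp, h1.symm, by simp [h2]⟩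
          · refine ⟨j, fun ⟨_, hb⟩ => hj hb, rfl, ?_⟩
            have hjs : j ≠ s := fun h => hj (h ▸ hs)
            simp [Function.update_of_ne hjs]
      have hB' : t ∉ B.erase s := fun h => hB (Finset.mem_of_mem_erase h)
      have h1 := ih (B.erase s) (Finset.erase_ssubset hs) (Function.update f s true) hB'
      have h2 := ih (B.erase s) (Finset.erase_ssubset hs) (Function.update f s false) hB'
      rw [key true] at h1
      rw [key false] at h2
      have hres := ResolutionClosure.resolve s h1 h2 (Finset.mem_insert_self _ _)
        (Finset.mem_insert_self _ _)
      have e1 : insert (s, true) C \ {(s, true)} = C := by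
        rw [Finset.sdiff_singleton_eq_erase, Finset.erase_insert (hnot true)]
      have e2 : insert (s, false) C \ {(s, false)} = C := by
        rw [Finset.sdiff_singleton_eq_erase, Finset.erase_insert (hnot false)]
      rwa [e1, e2, Finset.union_self] at hres

/-- From the set of all full clauses over `n ≥ 1` variables, resolution derives any pair of
contradicting 1-terminal clauses. -/
theorem full_clauses_resolve_to_units (n : ℕ) (hn : 1 ≤ n) (t : Fin n) :
    ResolutionClosure n {F | IsFullClause n F} {(t, true)} ∧
    ResolutionClosure n {F | IsFullClause n F} {(t, false)} := by
  have h : ∀ b : Bool, (Finset.univ \ Finset.univ.erase t).image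
      (fun i : Fin n => (i, (fun _ => b) i)) = ({(t, b)} : Finset (Fin n × Bool)) := by
    intro b
    ext ⟨i, c⟩
    simp [Prod.ext_iff]
    tauto
  constructor
  · have := aux_resolve n t (Finset.univ.erase t) (fun _ => true) (by simp)
    rwa [h true] at this
  · have := aux_resolve n t (Finset.univ.erase t) (fun _ => false) (by simp)
    rwa [h false] at this
end

section
/- Completeness: let n ≥ 1 and let S be an unsatisfiable instance of clauses over n variables. Then there exists a variable t : Fin n such that both unit clauses {(t, true)} and {(t, false)} belong to the resolution–expansion closure of S. -/
/-- The resolution–expansion closure of a set `S` of clauses: the smallest set of clauses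
containing `S`, closed under taking resolvents, and closed under adding any single literal
to a clause. -/
inductive ResExpClosure (n : ℕ) (S : Set (Finset (Fin n × Bool))) :
    Finset (Fin n × Bool) → Prop
  | base {C : Finset (Fin n × Bool)} : C ∈ S → ResExpClosure n S C
  | resolve {C D : Finset (Fin n × Bool)} (t : Fin n) :
      ResExpClosure n S C → ResExpClosure n S D →
      (t, true) ∈ C → (t, false) ∈ D →
      ResExpClosure n S ((C \ {(t, true)}) ∪ (D \ {(t, false)}))
  | expand {C : Finset (Fin n × Bool)} (l : Fin n × Bool) :
      ResExpClosure n S C → ResExpClosure n S (insert l C)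

lemma lit_cases {n : ℕ} (l : Fin n × Bool) (t : Fin n) (h : l.1 = t) :
    l = (t, true) ∨ l = (t, false) := by
  cases hb : l.2
  · right; exact Prod.ext h hb
  · left; exact Prod.ext h hb

lemma res_empty_clause (n : ℕ) (S : Set (Finset (Fin n × Bool)))
    (V : Finset (Fin n))
    (h : ∀ v : Fin n → Bool, ∃ C, ResExpClosure n S C ∧ (∀ l ∈ C, l.1 ∈ V) ∧
        ∀ l ∈ C, v l.1 ≠ l.2) :
    ResExpClosure n S ∅ := by
  induction V using Finset.induction_on with
  | empty =>
    obtain ⟨C, hC, hvars, _⟩ := h (fun _ => true)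
    have : C = ∅ := by
      ext l
      simp only [Finset.notMem_empty, iff_false]
      intro hl
      exact absurd (hvars l hl) (Finset.notMem_empty _)
    rwa [this] at hC
  | @insert t V' ht ih =>
    apply ih
    intro v
    obtain ⟨C₁, hC₁, hv₁, hf₁⟩ := h (Function.update v t true)
    obtain ⟨C₀, hC₀, hv₀, hf₀⟩ := h (Function.update v t false)
    have htC₁ : (t, true) ∉ C₁ := fun hmem => hf₁ _ hmem (by simp)
    have htC₀ : (t, false) ∉ C₀ := fun hmem => hf₀ _ hmem (by simp)
    have key : ∀ (C : Finset (Fin n × Bool)) (w : Bool),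
        (∀ l ∈ C, l.1 ∈ insert t V') → (∀ l ∈ C, Function.update v t w l.1 ≠ l.2) →
        (∀ l ∈ C, l.1 ≠ t) →
        (∀ l ∈ C, l.1 ∈ V') ∧ (∀ l ∈ C, v l.1 ≠ l.2) := by
      intro C w hvars hfals hnt
      refine ⟨fun l hl => ?_, fun l hl => ?_⟩
      · rcases Finset.mem_insert.mp (hvars l hl) with h' | h'
        · exact absurd h' (hnt l hl)
        · exact h'
      · have := hfals l hl
        rwa [Function.update_of_ne (hnt l hl)] at this
    by_cases h1 : (t, false) ∈ C₁
    · by_cases h0 : (t, true) ∈ C₀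
      · -- resolve
        have hnt₀ : ∀ l ∈ C₀ \ {(t, true)}, l.1 ≠ t := by
          intro l hl he
          rw [Finset.mem_sdiff, Finset.mem_singleton] at hl
          rcases lit_cases l t he with h' | h'
          · exact hl.2 h'
          · exact htC₀ (h' ▸ hl.1)
        have hnt₁ : ∀ l ∈ C₁ \ {(t, false)}, l.1 ≠ t := by
          intro l hl he
          rw [Finset.mem_sdiff, Finset.mem_singleton] at hl
          rcases lit_cases l t he with h' | h'
          · exact htC₁ (h' ▸ hl.1)
          · exact hl.2 h'
        refine ⟨(C₀ \ {(t, true)}) ∪ (C₁ \ {(t, false)}), .resolve t hC₀ hC₁ h0 h1,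
          fun l hl => ?_, fun l hl => ?_⟩ <;> rcases Finset.mem_union.mp hl with h' | h'
        · rcases Finset.mem_insert.mp
            (hv₀ l (Finset.mem_sdiff.mp h').1) with h'' | h''
          · exact absurd h'' (hnt₀ l h')
          · exact h''
        · rcases Finset.mem_insert.mp
            (hv₁ l (Finset.mem_sdiff.mp h').1) with h'' | h''
          · exact absurd h'' (hnt₁ l h')
          · exact h''
        · have := hf₀ l (Finset.mem_sdiff.mp h').1
          rwa [Function.update_of_ne (hnt₀ l h')] at this
        · have := hf₁ l (Finset.mem_sdiff.mp h').1
          rwa [Function.update_of_ne (hnt₁ l h')] at this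
      · have hnt : ∀ l ∈ C₀, l.1 ≠ t := by
          intro l hl he
          rcases lit_cases l t he with h' | h'
          · exact h0 (h' ▸ hl)
          · exact htC₀ (h' ▸ hl)
        obtain ⟨ha, hb⟩ := key C₀ false hv₀ hf₀ hnt
        exact ⟨C₀, hC₀, ha, hb⟩
    · have hnt : ∀ l ∈ C₁, l.1 ≠ t := by
        intro l hl he
        rcases lit_cases l t he with h' | h'
        · exact htC₁ (h' ▸ hl)
        · exact h1 (h' ▸ hl)
      obtain ⟨ha, hb⟩ := key C₁ true hv₁ hf₁ hnt
      exact ⟨C₁, hC₁, ha, hb⟩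

/-- Completeness: if `n ≥ 1` and `S` is unsatisfiable, then for some variable `t` both
unit clauses `{(t, true)}` and `{(t, false)}` belong to the resolution–expansion closure
of `S`. -/
theorem resolution_expansion_complete (n : ℕ) (hn : 1 ≤ n)
    (S : Finset (Finset (Fin n × Bool)))
    (hunsat : ¬ ∃ v : Fin n → Bool, ∀ C ∈ S, ∃ l ∈ C, v l.1 = l.2) :
    ∃ t : Fin n,
      ResExpClosure n (↑S) {(t, true)} ∧ ResExpClosure n (↑S) {(t, false)} := by
  push_neg at hunsat
  have hempty : ResExpClosure n (↑S) ∅ := by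
    apply res_empty_clause n (↑S) Finset.univ
    intro v
    obtain ⟨C, hCS, hf⟩ := hunsat v
    exact ⟨C, .base (by exact_mod_cast hCS), fun l _ => Finset.mem_univ _, hf⟩
  refine ⟨⟨0, hn⟩, ?_, ?_⟩
  · exact hempty.expand (⟨0, hn⟩, true)
  · exact hempty.expand (⟨0, hn⟩, false)
end
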